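/- arXiv:0707.2348 — 2 statements merged into one kernel-verified Lean document; each statement's English description precedes it below -/
import Mathlib

section
/- Fix d ≥ 1 and let F ∈ ℚ((q)) be a finite ℚ-linear combination of the Laurent series ((−q)^r − 2 + (−q)^{−r})^{g−1} with g ≥ 0 and 1 ≤ r ≤ d. If the coefficient of q^n in F vanishes for every integer n ≤ d, then F = 0. Equivalently, an element of V_d is uniquely determined by its coefficients of q^n for n ≤ d. -/
open HahnSeries

/-- `(−q)^r − 2 + (−q)^{−r}` as a formal Laurent series over `ℚ`. -/
noncomputable def PhiK (r : ℕ) : LaurentSeries ℚ :=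
  HahnSeries.single (r : ℤ) ((-1 : ℚ) ^ r) - 2 + HahnSeries.single (-(r : ℤ)) ((-1 : ℚ) ^ r)

/-!
For `g ≥ 1` the generator `PhiK r ^ (g - 1)` is a Laurent polynomial invariant under `q ↦ q⁻¹`,
while for `g = 0` it is `(PhiK r)⁻¹`, which has order exactly `r` because `PhiK r` has order `-r`.
So `F = P + G` with `P` symmetric and `G` a combination of the `(PhiK r)⁻¹`, `1 ≤ r ≤ d`.
Since `G` has no terms of degree `≤ 0`, neither has `P`, and by symmetry `P = 0`. Writing
`G = ∑ aᵣ (PhiK r)⁻¹`, the coefficient of `q^m` in `G` is a nonzero multiple of `aₘ` plus terms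
in the `aᵣ` with `r < m`, so all `aᵣ` vanish.
-/

namespace LaurentSeries

variable {R : Type*} [Semiring R]

section Symmetric

variable (R)

def symmetric : Submodule R (LaurentSeries R) where
  carrier := {f | ∀ n, f.coeff (-n) = f.coeff n}
  add_mem' {f g} hf hg n := by simp only [HahnSeries.coeff_add, hf n, hg n]
  zero_mem' _ := rfl
  smul_mem' c f hf n := by simp only [HahnSeries.coeff_smul, hf n]

variable {R}

theorem one_mem_symmetric : (1 : LaurentSeries R) ∈ symmetric R := fun n => by
  simp [HahnSeries.coeff_one]

theorem single_add_single_neg_mem_symmetric (n : ℤ) (c : R) :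
    single n c + single (-n) c ∈ symmetric R := fun m => by
  simp only [HahnSeries.coeff_add, coeff_single, neg_eq_iff_eq_neg]
  rw [add_comm]
  congr 2; simp [eq_comm]

theorem mul_mem_symmetric {f g : LaurentSeries R} (hf : f ∈ symmetric R) (hg : g ∈ symmetric R) :
    f * g ∈ symmetric R := fun n => by
  have neg_mem_support {h : LaurentSeries R} (hh : h ∈ symmetric R) (m : ℤ) :
      -m ∈ h.support ↔ m ∈ h.support := by simp [hh m]
  simp only [HahnSeries.coeff_mul]
  refine Finset.sum_equiv (Equiv.neg _) (fun ij => ?_) (fun ij _ => ?_)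
  · simp only [Finset.mem_antidiagonal, Equiv.neg_apply, Prod.fst_neg, Prod.snd_neg,
      neg_mem_support hf, neg_mem_support hg, ← neg_add, neg_eq_iff_eq_neg]
  · simp [hf ij.1, hg ij.2]

theorem pow_mem_symmetric {f : LaurentSeries R} (hf : f ∈ symmetric R) (k : ℕ) :
    f ^ k ∈ symmetric R := by
  induction k with
  | zero => simpa using one_mem_symmetric
  | succ k ih => simpa [pow_succ] using mul_mem_symmetric ih hf

theorem eq_zero_of_mem_symmetric {f : LaurentSeries R} (hf : f ∈ symmetric R)
    (h : ∀ n ≤ 0, f.coeff n = 0) : f = 0 := by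
  ext n
  rcases le_or_gt n 0 with hn | hn
  · exact h n hn
  · rw [HahnSeries.coeff_zero, ← hf n]
    exact h (-n) (by omega)

end Symmetric

theorem coeff_eq_zero_of_mem_span {s : Set (LaurentSeries R)} {n : ℤ}
    (hs : ∀ x ∈ s, x.coeff n = 0) {f : LaurentSeries R} (hf : f ∈ Submodule.span R s) :
    f.coeff n = 0 :=
  (Submodule.span_le (p := LinearMap.ker (coeff.linearMap n))).mpr hs hf

variable [NoZeroDivisors R]

theorem orderTop_eq_neg_of_mul_eq_one [Nontrivial R] {f g : LaurentSeries R}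
    (hfg : f * g = 1) {n : ℤ} (hf : f.orderTop = n) : g.orderTop = (-n : ℤ) := by
  have h := orderTop_mul f g
  rw [hfg, orderTop_one, hf] at h
  cases hg : g.orderTop with
  | top => simp [hg] at h
  | coe m =>
    rw [hg, ← WithTop.coe_add, ← WithTop.coe_zero, WithTop.coe_inj] at h
    rw [WithTop.coe_inj]
    omega

theorem eq_zero_of_mem_span_of_orderTop_eq {H : ℕ → LaurentSeries R}
    (hH : ∀ s, 1 ≤ s → (H s).orderTop = (s : ℤ)) (m : ℕ) {f : LaurentSeries R}
    (hf : f ∈ Submodule.span R (H '' Set.Icc 1 m)) (hvan : ∀ n ≤ (m : ℤ), f.coeff n = 0) :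
    f = 0 := by
  induction m generalizing f with
  | zero => simpa using hf
  | succ m ih =>
    rw [← Order.succ_eq_add_one, ← Set.insert_Icc_right_eq_Icc_succ (by simp),
      Set.image_insert_eq, Submodule.mem_span_insert] at hf
    obtain ⟨c, g, hg, rfl⟩ := hf
    have hlow : ∀ n < ((m + 1 : ℕ) : ℤ), (H (m + 1)).coeff n = 0 := fun n hn =>
      coeff_eq_zero_of_lt_orderTop (by rw [hH _ le_add_self]; exact_mod_cast hn)
    obtain rfl : g = 0 := ih hg fun n hn => by
      simpa [hlow n (by omega)] using hvan n (by omega)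
    have hc : c * (H (m + 1)).coeff (m + 1) = 0 := by simpa using hvan (m + 1) le_rfl
    have hlead : (H (m + 1)).coeff (m + 1) ≠ 0 :=
      coeff_orderTop_ne (by exact_mod_cast hH _ le_add_self)
    simp [(mul_eq_zero.mp hc).resolve_right hlead]

end LaurentSeries

open LaurentSeries

theorem PhiK_mem_symmetric (r : ℕ) : PhiK r ∈ symmetric ℚ := by
  rw [PhiK, sub_add_eq_add_sub, ← one_add_one_eq_two]
  exact sub_mem (single_add_single_neg_mem_symmetric _ _)
    (add_mem one_mem_symmetric one_mem_symmetric)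

theorem orderTop_PhiK {r : ℕ} (hr : 1 ≤ r) : (PhiK r).orderTop = (-r : ℤ) := by
  refine orderTop_eq_of_le ?_ fun n hn => ?_
  · simp [PhiK, ← single_zero_ofNat, show -(r : ℤ) ≠ r by omega, show -(r : ℤ) ≠ 0 by omega]
  · by_contra! hlt
    simp [PhiK, ← single_zero_ofNat, show n ≠ r by omega, show n ≠ 0 by omega,
      show n ≠ -r by omega] at hn

theorem orderTop_inv_PhiK {r : ℕ} (hr : 1 ≤ r) : (PhiK r)⁻¹.orderTop = r := by
  have hne : PhiK r ≠ 0 := orderTop_ne_top.mp (by simp [orderTop_PhiK hr])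
  simpa using orderTop_eq_neg_of_mul_eq_one (mul_inv_cancel₀ hne) (orderTop_PhiK hr)

theorem span_PhiK_zpow_le (d : ℕ) :
    Submodule.span ℚ
      {x : LaurentSeries ℚ | ∃ (g : ℕ) (r : ℕ), 1 ≤ r ∧ r ≤ d ∧ x = (PhiK r) ^ ((g : ℤ) - 1)} ≤
      symmetric ℚ ⊔ Submodule.span ℚ ((fun r => (PhiK r)⁻¹) '' Set.Icc 1 d) := by
  rw [Submodule.span_le]
  rintro _ ⟨g, r, hr, hrd, rfl⟩
  cases g with
  | zero => exact Submodule.mem_sup_right (Submodule.subset_span ⟨r, ⟨hr, hrd⟩, by simp⟩)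
  | succ g =>
    exact Submodule.mem_sup_left (by simpa using pow_mem_symmetric (PhiK_mem_symmetric r) g)

theorem Vd_determined_by_low_coefficients_general (d : ℕ) (F : LaurentSeries ℚ)
    (hF : F ∈ Submodule.span ℚ
      {x : LaurentSeries ℚ | ∃ (g : ℕ) (r : ℕ), 1 ≤ r ∧ r ≤ d ∧ x = (PhiK r) ^ ((g : ℤ) - 1)})
    (hvan : ∀ n : ℤ, n ≤ (d : ℤ) → F.coeff n = 0) :
    F = 0 := by
  obtain ⟨P, hP, G, hG, rfl⟩ := Submodule.mem_sup.mp (span_PhiK_zpow_le d hF)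
  have hG_nonpos (n : ℤ) (hn : n ≤ 0) : G.coeff n = 0 := by
    refine coeff_eq_zero_of_mem_span ?_ hG
    rintro _ ⟨r, ⟨hr, -⟩, rfl⟩
    refine coeff_eq_zero_of_lt_orderTop ?_
    rw [orderTop_inv_PhiK hr]
    exact_mod_cast (by omega : n < r)
  obtain rfl : P = 0 := eq_zero_of_mem_symmetric hP fun n hn => by
    simpa [hG_nonpos n hn] using hvan n (by omega)
  rw [zero_add] at hvan ⊢
  exact eq_zero_of_mem_span_of_orderTop_eq (fun r hr => orderTop_inv_PhiK hr) d hG hvan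

/-- **Lemma* 3.6** of Pandharipande–Thomas, "Curve counting via stable pairs in the derived
category".  Fix `d ≥ 1` and let `F ∈ ℚ((q))` be a finite `ℚ`-linear combination of the Laurent
series `((−q)^r − 2 + (−q)^{−r})^{g−1}` with `g ≥ 0` and `1 ≤ r ≤ d` (i.e. `F ∈ V_d`).  If the
coefficient of `q^n` in `F` vanishes for every integer `n ≤ d`, then `F = 0`: an element of `V_d`
is uniquely determined by its coefficients of `q^n` for `n ≤ d`. -/
theorem Vd_determined_by_low_coefficients (d : ℕ) (hd : 1 ≤ d) (F : LaurentSeries ℚ)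
    (hF : F ∈ Submodule.span ℚ
      {x : LaurentSeries ℚ | ∃ (g : ℕ) (r : ℕ), 1 ≤ r ∧ r ≤ d ∧ x = (PhiK r) ^ ((g : ℤ) - 1)})
    (hvan : ∀ n : ℤ, n ≤ (d : ℤ) → F.coeff n = 0) :
    F = 0 :=
  Vd_determined_by_low_coefficients_general d F hF hvan
end

section
/- Fix d ≥ 1 and let c_1,…,c_d ∈ ℚ. If the Laurent series Σ_{r=1}^d c_r · ((−q)^r − 2 + (−q)^{−r})^{−1} = Σ_{r=1}^d c_r · Σ_{m≥1} m·(−q)^{rm} ∈ ℚ((q)) has only finitely many nonzero coefficients (i.e., is a Laurent polynomial), then c_1 = ⋯ = c_d = 0. In particular, the expansions of (−q)^r/(1−(−q)^r)² for 1 ≤ r ≤ d are linearly independent in V_d modulo V_0. -/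
/-!
Writing `x = (-q)^r`, one has `x · ((-q)^r - 2 + (-q)^{-r}) = (1 - x)^2`, so the inverse of
`(-q)^r - 2 + (-q)^{-r}` is the image of `X / (1 - X)^2 = ∑ m X^m` under `X ↦ (-q)^r`: its
`q^n`-coefficient is `(-1)^n n / r` when `r ∣ n` and `0` otherwise. For a prime `P > d`, a divisor
of `rP` that is at most `d` divides `r`, so the `q^{rP}`-coefficient of `∑ c_r' (…)^{-1}` is
`± P ∑_{r' ∣ r} c_r' r / r'`. If the series is a Laurent polynomial these divisor sums vanish for
every `r ≤ d`, and Möbius-style induction on `r` gives `c_r = 0`.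
-/

open HahnSeries

open PowerSeries in
theorem PowerSeries.one_sub_X_sq_mul_mk_natCast {R : Type*} [CommRing R] :
    (1 - X) ^ 2 * mk (fun n => (n : R)) = X := by
  have hmk : mk (fun n => (n : R)) = X * mk 1 ^ 2 := by
    ext (_ | n)
    · simp
    · simp [mk_one_pow_eq_mk_choose_add, coeff_succ_X_mul, add_comm]
  rw [hmk, mul_left_comm, ← mul_pow, mul_comm (1 - X), mk_one_mul_one_sub_eq_one, one_pow, mul_one]

section substNegXPow

variable {R : Type*} [CommRing R] (r : ℕ) (hr : r ≠ 0)

noncomputable def substNegXPow : PowerSeries R →+* LaurentSeries R :=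
  (ofPowerSeries ℤ R).comp ((PowerSeries.rescale (-1)).comp (PowerSeries.expand r hr).toRingHom)

theorem substNegXPow_X : substNegXPow r hr PowerSeries.X = single (r : ℤ) ((-1 : R) ^ r) := by
  simp [substNegXPow, PowerSeries.rescale_X, ← single_neg, single_pow]

theorem coeff_substNegXPow (f : PowerSeries R) (n : ℕ) :
    (substNegXPow r hr f).coeff (n : ℤ) =
      if r ∣ n then (-1) ^ n * PowerSeries.coeff (n / r) f else 0 := by
  simp [substNegXPow, PowerSeries.coeff_rescale, PowerSeries.coeff_expand]

end substNegXPow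

theorem single_mul_PhiK (r : ℕ) :
    single (r : ℤ) ((-1 : ℚ) ^ r) * PhiK r = (1 - single (r : ℤ) ((-1 : ℚ) ^ r)) ^ 2 := by
  have hinv : single (r : ℤ) ((-1 : ℚ) ^ r) * single (-(r : ℤ)) ((-1 : ℚ) ^ r) = 1 := by
    rw [single_mul_single, add_neg_cancel, ← mul_pow]
    simp
  rw [PhiK]
  linear_combination hinv

theorem PhiK_zpow_neg_one {r : ℕ} (hr : r ≠ 0) :
    PhiK r ^ (-1 : ℤ) = substNegXPow r hr (PowerSeries.mk fun n => (n : ℚ)) := by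
  have hx : single (r : ℤ) ((-1 : ℚ) ^ r) ≠ 0 := by simp
  rw [zpow_neg_one]
  refine inv_eq_of_mul_eq_one_right (mul_left_cancel₀ hx ?_)
  calc _ = (1 - single (r : ℤ) ((-1 : ℚ) ^ r)) ^ 2 *
        substNegXPow r hr (PowerSeries.mk fun n => (n : ℚ)) := by
        rw [← mul_assoc, single_mul_PhiK]
    _ = substNegXPow r hr ((1 - PowerSeries.X) ^ 2 * PowerSeries.mk fun n => (n : ℚ)) := by
        simp [substNegXPow_X]
    _ = _ := by rw [PowerSeries.one_sub_X_sq_mul_mk_natCast, substNegXPow_X, mul_one]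

open Finset

theorem coeff_sum_smul_PhiK_zpow_neg_one (c : ℕ → ℚ) (d n : ℕ) :
    (∑ r ∈ Icc 1 d, c r • PhiK r ^ (-1 : ℤ)).coeff (n : ℤ) =
      (-1) ^ n * ∑ r ∈ Icc 1 d with r ∣ n, c r * ((n / r : ℕ) : ℚ) := by
  rw [coeff_sum, sum_filter, mul_sum]
  refine sum_congr rfl fun r hr => ?_
  rw [coeff_smul, PhiK_zpow_neg_one (Nat.one_le_iff_ne_zero.mp (mem_Icc.mp hr).1), coeff_substNegXPow, PowerSeries.coeff_mk,
    smul_eq_mul]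
  split_ifs <;> ring

theorem filter_dvd_mul_prime_Icc_eq_divisors {P d r : ℕ} (hP : P.Prime) (hdP : d < P)
    (hr : r ∈ Icc 1 d) : {r' ∈ Icc 1 d | r' ∣ r * P} = r.divisors := by
  obtain ⟨hr1, hrd⟩ := mem_Icc.mp hr
  ext r'
  simp only [mem_filter, mem_Icc, Nat.mem_divisors]
  constructor
  · rintro ⟨⟨hr'1, hr'd⟩, hdvd⟩
    have hcop : Nat.Coprime r' P :=
      (hP.coprime_iff_not_dvd.mpr fun h => by have := Nat.le_of_dvd (by omega) h; omega).symm
    exact ⟨hcop.dvd_of_dvd_mul_right hdvd, by omega⟩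
  · rintro ⟨hdvd, -⟩
    have := Nat.le_of_dvd (by omega) hdvd
    exact ⟨⟨Nat.pos_of_dvd_of_pos hdvd hr1, by omega⟩, dvd_mul_of_dvd_left hdvd P⟩

theorem eq_zero_of_sum_divisors_mul_eq_zero {R : Type*} [Semiring R] (c : ℕ → R) (d : ℕ)
    (h : ∀ r ∈ Icc 1 d, ∑ r' ∈ r.divisors, c r' * ((r / r' : ℕ) : R) = 0) :
    ∀ r ∈ Icc 1 d, c r = 0 := by
  intro r
  induction r using Nat.strong_induction_on with
  | _ r ih =>
    intro hr
    obtain ⟨hr1, hrd⟩ := mem_Icc.mp hr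
    have hproper : ∑ r' ∈ r.properDivisors, c r' * ((r / r' : ℕ) : R) = 0 := by
      refine sum_eq_zero fun r' hr' => ?_
      obtain ⟨hdvd, hlt⟩ := Nat.mem_properDivisors.mp hr'
      have hr'1 : 1 ≤ r' := Nat.pos_of_dvd_of_pos hdvd hr1
      rw [ih r' hlt (mem_Icc.mpr ⟨hr'1, by omega⟩), zero_mul]
    simpa [← Nat.cons_self_properDivisors (by omega : r ≠ 0), hproper, Nat.div_self hr1]
      using h r hr

theorem phi_inverses_linearly_independent_mod_laurent_polynomials_general
    (d : ℕ) (c : ℕ → ℚ)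
    (hfin : (∑ r ∈ Finset.Icc 1 d, c r • (PhiK r) ^ (-1 : ℤ)).support.Finite) :
    ∀ r ∈ Finset.Icc 1 d, c r = 0 := by
  obtain ⟨N, hN⟩ := hfin.bddAbove
  refine eq_zero_of_sum_divisors_mul_eq_zero c d fun r hr => ?_
  obtain ⟨P, hPle, hP⟩ := Nat.exists_infinite_primes (max (d + 1) (N.toNat + 1))
  have hcoeff : (∑ r ∈ Icc 1 d, c r • PhiK r ^ (-1 : ℤ)).coeff ((r * P : ℕ) : ℤ) = 0 := by
    by_contra h
    have := hN (mem_support _ _ |>.mpr h)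
    have := Int.self_le_toNat N
    have := Nat.le_mul_of_pos_left P (mem_Icc.mp hr).1
    omega
  rw [coeff_sum_smul_PhiK_zpow_neg_one, filter_dvd_mul_prime_Icc_eq_divisors hP (by omega) hr]
    at hcoeff
  have hscale : ∑ r' ∈ r.divisors, c r' * (((r * P) / r' : ℕ) : ℚ) =
      P * ∑ r' ∈ r.divisors, c r' * ((r / r' : ℕ) : ℚ) := by
    rw [mul_sum]
    refine sum_congr rfl fun r' hr' => ?_
    rw [Nat.mul_div_right_comm (Nat.dvd_of_mem_divisors hr')]
    push_cast
    ring
  simpa [hscale, hP.ne_zero] using hcoeff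

/-- **Linear independence of the `g = 0` generators of `V_d` modulo `V_0`** (Pandharipande–Thomas,
"Curve counting via stable pairs in the derived category").  Fix `d ≥ 1` and `c_1, …, c_d ∈ ℚ`.
If the Laurent series `Σ_{r=1}^d c_r · ((−q)^r − 2 + (−q)^{−r})^{−1} ∈ ℚ((q))` has only finitely
many nonzero coefficients (i.e. is a Laurent polynomial), then `c_1 = ⋯ = c_d = 0`.  In
particular, the expansions of `(−q)^r/(1−(−q)^r)²` for `1 ≤ r ≤ d` are linearly independent in
`V_d` modulo `V_0`. -/
theorem phi_inverses_linearly_independent_mod_laurent_polynomials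
    (d : ℕ) (hd : 1 ≤ d) (c : ℕ → ℚ)
    (hfin : (∑ r ∈ Finset.Icc 1 d, c r • (PhiK r) ^ (-1 : ℤ)).support.Finite) :
    ∀ r ∈ Finset.Icc 1 d, c r = 0 :=
  phi_inverses_linearly_independent_mod_laurent_polynomials_general d c hfin
end
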